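/- Let r ≥ 2 and M ≥ 2 be integers and let β be an integer with 2 ≤ β ≤ M. Set T(X) := r·∏_{j=1}^{M}(1−jX) ∈ ℤ[X] and B(X) := Σ_{j=1}^{β−1} j·∏_{1≤j'≤M, j'≠j}(1−j'X) ∈ ℤ[X]. Let D ≥ 0 and let P ∈ ℤ[X] have degree ≤ D. Define S_0 := P, S_{k+1} := T·S_k′ − k·T′·S_k + B·S_k, and P^{⟨k⟩} := S_k/k! ∈ ℚ[X]. Then for every k ≥ 0: (1) r^k·P^{⟨k⟩} has integer coefficients (that is, P^{⟨k⟩} is a polynomial with rational coefficients whose denominators divide r^k), and deg(P^{⟨k⟩}) ≤ D + k·M; (2) for every positive integer n, the rational number r^k·n^(D+kM)·P^{⟨k⟩}(1/n) is an integer. -/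

import Mathlib

/-- `T(X) = r·∏_{j=1}^{M} (1−jX) ∈ ℤ[X]`. -/
noncomputable def Tpoly (r M : ℕ) : Polynomial ℤ :=
  Polynomial.C (r : ℤ) * ∏ j ∈ Finset.Icc 1 M, (1 - Polynomial.C (j : ℤ) * Polynomial.X)

/-- `B(X) = Σ_{j=1}^{β−1} j·∏_{1≤j'≤M, j'≠j} (1−j'X) ∈ ℤ[X]` (equal to `T·A`). -/
noncomputable def Bpoly (M β : ℕ) : Polynomial ℤ :=
  ∑ j ∈ Finset.Icc 1 (β - 1),
    Polynomial.C (j : ℤ) *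
      ∏ j' ∈ (Finset.Icc 1 M).erase j, (1 - Polynomial.C (j' : ℤ) * Polynomial.X)

/-- The polynomials `S_k`, defined by `S_0 = P`, `S_{k+1} = T·S_k′ − k·T′·S_k + B·S_k`. -/
noncomputable def Sseq (T B P : Polynomial ℤ) : ℕ → Polynomial ℤ
  | 0 => P
  | k + 1 => T * Polynomial.derivative (Sseq T B P k)
      - (k : Polynomial ℤ) * Polynomial.derivative T * Sseq T B P k
      + B * Sseq T B P k

/-- The alternate Padé polynomials `P^{⟨k⟩} := S_k / k! ∈ ℚ[X]`. -/
noncomputable def Pang (T B P : Polynomial ℤ) (k : ℕ) : Polynomial ℚ :=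
  Polynomial.C ((k.factorial : ℚ)⁻¹) * (Sseq T B P k).map (Int.castRingHom ℚ)

/-!
The recursion says `S_k · E = T^k · (d/dX)^k (E · P)` whenever `T · E' = B · E`, i.e. whenever
`E` is an integrating factor of `A = B / T`. Over `ℚ` that factor would be
`∏_{j<β} (1 - jX)^(-1/r)`, which is not a polynomial; but modulo any `m` coprime to `r` we may
replace `-1/r` by a natural number `c` with `r c ≡ -1 (mod m)`. If moreover `m ∣ k!`, then
`(d/dX)^k` vanishes modulo `m`, and since `E` has constant term `1` we get `m ∣ S_k`. The primes
dividing `r` are absorbed by `r^k`, because `v_p(k!) ≤ k`, so `k! ∣ r^k S_k`. Part (2) follows by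
evaluating the reversed polynomial at `n`.
-/

open Polynomial Finset
open scoped Nat

namespace Polynomial

variable {R : Type*}

theorem iterate_derivative_eq_zero_of_factorial_eq_zero [Semiring R] {k : ℕ}
    (hk : (k ! : R) = 0) (p : R[X]) : derivative^[k] p = 0 := by
  rw [← factorial_smul_hasseDeriv, LinearMap.smul_apply, nsmul_eq_mul, ← C_eq_natCast, hk,
    C_0, zero_mul]

theorem eq_zero_of_mul_eq_zero_of_coeff_zero_eq_one [CommRing R] {p q : R[X]}
    (hq : q.coeff 0 = 1) (h : p * q = 0) : p = 0 :=
  (mul_right_mem_nonZeroDivisors_eq_zero_iff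
    (mem_nonzeroDivisors_of_coeff_mem 0 (hq ▸ one_mem _))).1 h

theorem mul_derivative_pow_of_mul_eq [CommRing R] {l g q : R[X]} (h : l * g = q) (c : ℕ) :
    q * derivative (l ^ c) = C (c : R) * derivative l * g * l ^ c := by
  cases c with
  | zero => simp
  | succ c => rw [derivative_pow_succ, ← h]; push_cast; ring

theorem mul_derivative_prod_eq_sum_mul_prod [CommRing R] {ι : Type*} [DecidableEq ι] {s : Finset ι}
    {f g : ι → R[X]} {q : R[X]} (h : ∀ j ∈ s, q * derivative (f j) = g j * f j) :
    q * derivative (∏ j ∈ s, f j) = (∑ j ∈ s, g j) * ∏ j ∈ s, f j := by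
  rw [derivative_prod_finset, mul_sum, sum_mul]
  refine sum_congr rfl fun j hj => ?_
  rw [← mul_prod_erase s f hj, mul_left_comm, h j hj]
  ring

theorem mul_eq_pow_mul_iterate_derivative [CommRing R] {t b q e : R[X]} {s : ℕ → R[X]}
    (he : t * derivative e = b * e) (h0 : s 0 = q)
    (hs : ∀ k : ℕ, s (k + 1) = t * derivative (s k) - k * derivative t * s k + b * s k)
    (k : ℕ) : s k * e = t ^ k * derivative^[k] (e * q) := by
  induction k with
  | zero => rw [h0, mul_comm]; simp
  | succ k ih =>
    have hdiff : s (k + 1) * e = t * derivative (s k * e) - k * derivative t * (s k * e) := by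
      rw [hs, derivative_mul]; linear_combination (-s k) * he
    have htk : t * derivative (t ^ k) = k * derivative t * t ^ k := by
      simpa [mul_comm] using mul_derivative_pow_of_mul_eq (mul_one t) k
    rw [hdiff, ih, derivative_mul, Function.iterate_succ_apply']
    linear_combination derivative^[k] (e * q) * htk

theorem pow_mul_eval_inv_map_eq_map_eval_reflect {K : Type*} [CommRing R] [Field K]
    (f : R →+* K) {Q : R[X]} {N : ℕ} (hQ : Q.natDegree ≤ N) {x : R} (hx : f x ≠ 0) :
    f x ^ N * (Q.map f).eval (f x)⁻¹ = f ((reflect N Q).eval x) := by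
  let := invertibleOfNonzero (inv_ne_zero hx)
  have h := eval₂_reflect_mul_pow f (f x)⁻¹ N Q hQ
  rw [invOf_eq_inv, inv_inv, eval₂_at_apply] at h
  rw [eval_map, ← h, mul_left_comm, ← mul_pow, mul_inv_cancel₀ hx, one_pow, mul_one]

theorem natDegree_prod_one_sub_C_mul_X_le [CommRing R] {ι : Type*} (a : ι → R)
    (s : Finset ι) :
    (∏ i ∈ s, (1 - C (a i) * X)).natDegree ≤ #s := by
  refine (natDegree_prod_le _ _).trans ?_
  rw [card_eq_sum_ones]
  exact sum_le_sum fun i _ => by compute_degree!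

end Polynomial

theorem natCast_factorial_dvd_pow_mul_of_forall_coprime {r k : ℕ} {s : ℤ}
    (hs : ∀ m : ℕ, r.Coprime m → m ∣ k ! → (m : ℤ) ∣ s) : (k ! : ℤ) ∣ r ^ k * s := by
  rw [← Int.natAbs_dvd_natAbs, Int.natAbs_mul, Int.natAbs_pow, Int.natAbs_natCast,
    Int.natAbs_natCast, Nat.dvd_iff_prime_pow_dvd_dvd]
  intro p i hp hpi
  by_cases hpr : p ∣ r
  · have : Fact p.Prime := ⟨hp⟩
    have hik : i ≤ k := ((padicValNat_dvd_iff_le k.factorial_ne_zero).1 hpi).trans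
      (padicValNat_factorial_le p k)
    exact ((pow_dvd_pow p hik).trans (pow_dvd_pow_of_dvd hpr k)).mul_right _
  · have hcop : r.Coprime (p ^ i) :=
      (Nat.Coprime.pow_left i ((Nat.Prime.coprime_iff_not_dvd hp).2 hpr)).symm
    exact Dvd.dvd.mul_left (Int.natCast_dvd.1 (hs _ hcop hpi)) _

theorem natDegree_Sseq_le {T B P : ℤ[X]} {M D : ℕ} (hT : T.natDegree ≤ M)
    (hB : B.natDegree ≤ M) (hP : P.natDegree ≤ D) (k : ℕ) :
    (Sseq T B P k).natDegree ≤ D + k * M := by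
  induction k with
  | zero => simpa [Sseq] using hP
  | succ k ih =>
    have hS' : (derivative (Sseq T B P k)).natDegree ≤ D + k * M :=
      (natDegree_derivative_le _).trans (by omega)
    have hT' : (derivative T).natDegree ≤ M := (natDegree_derivative_le _).trans (by omega)
    have hkT' : ((k : ℤ[X]) * derivative T).natDegree ≤ M := by
      simpa using natDegree_mul_le_of_le (natDegree_natCast k).le hT'
    rw [Sseq, show D + (k + 1) * M = M + (D + k * M) by ring]
    have hsub := natDegree_sub_le_of_le (natDegree_mul_le_of_le hT hS')
      (natDegree_mul_le_of_le hkT' ih)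
    rw [max_self] at hsub
    exact natDegree_add_le_of_degree_le hsub (natDegree_mul_le_of_le hB ih)

theorem natDegree_Tpoly_le (r M : ℕ) : (Tpoly r M).natDegree ≤ M :=
  (natDegree_C_mul_le _ _).trans
    ((natDegree_prod_one_sub_C_mul_X_le (fun j : ℕ => (j : ℤ)) _).trans (by simp))

theorem natDegree_Bpoly_le (M β : ℕ) : (Bpoly M β).natDegree ≤ M := by
  refine natDegree_sum_le_of_forall_le _ _ fun j _ => (natDegree_C_mul_le _ _).trans ?_
  exact (natDegree_prod_one_sub_C_mul_X_le (fun j : ℕ => (j : ℤ)) _).trans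
    (card_erase_le.trans (by simp))

noncomputable def Epoly (β c : ℕ) : ℤ[X] :=
  ∏ j ∈ Icc 1 (β - 1), (1 - C (j : ℤ) * X) ^ c

theorem Epoly_coeff_zero (β c : ℕ) : (Epoly β c).coeff 0 = 1 := by
  simp [Epoly, coeff_zero_eq_eval_zero, eval_prod]

theorem Tpoly_mul_derivative_Epoly {r M β : ℕ} (hβM : β ≤ M) (c : ℕ) :
    Tpoly r M * derivative (Epoly β c) = C (-(r * c : ℤ)) * Bpoly M β * Epoly β c := by
  have hfactor : ∀ j ∈ Icc 1 (β - 1), Tpoly r M * derivative ((1 - C (j : ℤ) * X) ^ c) =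
      C (-(r * c : ℤ)) * (C (j : ℤ) * ∏ j' ∈ (Icc 1 M).erase j, (1 - C (j' : ℤ) * X)) *
        (1 - C (j : ℤ) * X) ^ c := by
    intro j hj
    have hjM : j ∈ Icc 1 M := by simp only [mem_Icc] at hj ⊢; omega
    rw [mul_derivative_pow_of_mul_eq
      (g := C (r : ℤ) * ∏ j' ∈ (Icc 1 M).erase j, (1 - C (j' : ℤ) * X))
      (by rw [Tpoly, ← mul_prod_erase _ _ hjM]; ring)]
    simp only [derivative_sub, derivative_one, derivative_C_mul_X, map_neg, map_mul]
    ring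
  rw [Epoly, mul_derivative_prod_eq_sum_mul_prod hfactor, Bpoly, mul_sum]

theorem natCast_dvd_coeff_Sseq {r M β m k : ℕ} (hβM : β ≤ M) (hrm : r.Coprime m)
    (hmk : m ∣ k !) (P : ℤ[X]) (v : ℕ) :
    (m : ℤ) ∣ (Sseq (Tpoly r M) (Bpoly M β) P k).coeff v := by
  have : NeZero m := ⟨fun h => k.factorial_ne_zero (Nat.eq_zero_of_zero_dvd (h ▸ hmk))⟩
  let f := Int.castRingHom (ZMod m)
  set c := (-((ZMod.unitOfCoprime r hrm)⁻¹ : (ZMod m)ˣ) : ZMod m).val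
  have hrc : f (-(r * c : ℤ)) = 1 := by simp [f, c]
  have he : (Tpoly r M).map f * derivative ((Epoly β c).map f) =
      (Bpoly M β).map f * (Epoly β c).map f := by
    rw [derivative_map, ← Polynomial.map_mul, Tpoly_mul_derivative_Epoly hβM,
      Polynomial.map_mul, Polynomial.map_mul, map_C, hrc, C_1, one_mul]
  have hconj := mul_eq_pow_mul_iterate_derivative he
    (s := fun k => (Sseq (Tpoly r M) (Bpoly M β) P k).map f) rfl
    (fun k => by simp [Sseq, derivative_map]) k
  rw [iterate_derivative_eq_zero_of_factorial_eq_zero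
    ((ZMod.natCast_eq_zero_iff _ _).2 hmk), mul_zero] at hconj
  have hzero := eq_zero_of_mul_eq_zero_of_coeff_zero_eq_one
    (by rw [coeff_map, Epoly_coeff_zero, map_one]) hconj
  rw [← ZMod.intCast_zmod_eq_zero_iff_dvd, ← eq_intCast f, ← coeff_map, hzero, coeff_zero]

theorem exists_map_eq_C_pow_mul_Pang {r M β D : ℕ} (hβM : β ≤ M) {P : ℤ[X]}
    (hP : P.natDegree ≤ D) (k : ℕ) :
    ∃ Q : ℤ[X],
      Q.map (Int.castRingHom ℚ) = C ((r : ℚ) ^ k) * Pang (Tpoly r M) (Bpoly M β) P k ∧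
      Q.natDegree ≤ D + k * M := by
  have hdvd : C (k ! : ℤ) ∣ C ((r : ℤ) ^ k) * Sseq (Tpoly r M) (Bpoly M β) P k :=
    (C_dvd_iff_dvd_coeff _ _).2 fun v => by
      rw [coeff_C_mul]
      exact natCast_factorial_dvd_pow_mul_of_forall_coprime fun m hrm hmk =>
        natCast_dvd_coeff_Sseq hβM hrm hmk P v
  obtain ⟨Q, hQ⟩ := hdvd
  refine ⟨Q, ?_, ?_⟩
  · have hQℚ := congrArg (map (Int.castRingHom ℚ)) hQ
    rw [Polynomial.map_mul, Polynomial.map_mul, map_C, map_C] at hQℚ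
    simp only [eq_intCast, Int.cast_pow, Int.cast_natCast] at hQℚ
    rw [Pang, mul_left_comm, hQℚ, ← mul_assoc, ← C_mul, inv_mul_cancel₀ (by positivity), C_1,
      one_mul]
  · have hS := natDegree_Sseq_le (natDegree_Tpoly_le r M) (natDegree_Bpoly_le M β) hP k
    rw [← natDegree_C_mul (a := (k ! : ℤ)) (by positivity), ← hQ]
    exact (natDegree_C_mul_le _ _).trans hS

theorem rationals_from_pade_polynomials_general (r M : ℕ)
    (β : ℕ) (hβM : β ≤ M)
    (D : ℕ) (P : Polynomial ℤ) (hdeg : P.natDegree ≤ D) (k : ℕ) :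
    (∀ v : ℕ, ∃ m : ℤ,
        (r : ℚ) ^ k * (Pang (Tpoly r M) (Bpoly M β) P k).coeff v = (m : ℚ)) ∧
    (Pang (Tpoly r M) (Bpoly M β) P k).natDegree ≤ D + k * M ∧
    (∀ n : ℕ, 0 < n → ∃ m : ℤ,
        (r : ℚ) ^ k * (n : ℚ) ^ (D + k * M)
            * Polynomial.eval (1 / (n : ℚ)) (Pang (Tpoly r M) (Bpoly M β) P k)
          = (m : ℚ)) := by
  obtain ⟨Q, hQ, hQdeg⟩ := exists_map_eq_C_pow_mul_Pang (r := r) hβM hdeg k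
  refine ⟨fun v => ⟨Q.coeff v, ?_⟩, ?_, fun n hn => ⟨(reflect (D + k * M) Q).eval n, ?_⟩⟩
  · rw [← coeff_C_mul, ← hQ, coeff_map, eq_intCast]
  · exact (natDegree_C_mul_le _ _).trans (natDegree_map_le.trans
      (natDegree_Sseq_le (natDegree_Tpoly_le r M) (natDegree_Bpoly_le M β) hdeg k))
  · have h := pow_mul_eval_inv_map_eq_map_eval_reflect (Int.castRingHom ℚ) hQdeg (x := n)
      (by simpa using hn.ne')
    rw [hQ, eval_C_mul, eq_intCast, eq_intCast, Int.cast_natCast] at h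
    rw [← h, one_div]
    ring

/-- **Rational numbers from Padé polynomials** (Lemma 6.4).
(1) `r^k·P^{⟨k⟩}` has integer coefficients, and `deg(P^{⟨k⟩}) ≤ D + kM`;
(2) for every positive integer `n`, `r^k·n^(D+kM)·P^{⟨k⟩}(1/n)` is an integer. -/
theorem rationals_from_pade_polynomials (r M : ℕ) (hr : 2 ≤ r) (hM : 2 ≤ M)
    (β : ℕ) (hβ : 2 ≤ β) (hβM : β ≤ M)
    (D : ℕ) (P : Polynomial ℤ) (hdeg : P.natDegree ≤ D) (k : ℕ) :
    (∀ v : ℕ, ∃ m : ℤ,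
        (r : ℚ) ^ k * (Pang (Tpoly r M) (Bpoly M β) P k).coeff v = (m : ℚ)) ∧
    (Pang (Tpoly r M) (Bpoly M β) P k).natDegree ≤ D + k * M ∧
    (∀ n : ℕ, 0 < n → ∃ m : ℤ,
        (r : ℚ) ^ k * (n : ℚ) ^ (D + k * M)
            * Polynomial.eval (1 / (n : ℚ)) (Pang (Tpoly r M) (Bpoly M β) P k)
          = (m : ℚ)) :=
  rationals_from_pade_polynomials_general r M β hβM D P hdeg k
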